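/- Let G be a simple graph on n vertices with maximum degree at most d, let u, v be vertices of G, let t ≥ 0 be an integer, and let ε > 0. If q_u^t and q_v^t are ε-far from collinear, then both eigenvalues of the 2×2 symmetric matrix A_{u,v} are at least ε². -/

import Mathlib

/-!
If `G x = μ x` for the Gram matrix `G` of `a, b` and `x ≠ 0`, then `c = x₀ a + x₁ b` satisfies
`‖c‖² = μ ‖x‖²`. Subtracting `(x₀ / ‖x‖²) c` from `a` and `(x₁ / ‖x‖²) c` from `b`, perturbations
of norm at most `√μ`, leaves two multiples of `x₁ a - x₀ b`. So `μ < ε²` would make `a` and `b`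
`ε`-close to collinear.
-/

open scoped RealInnerProductSpace

open scoped Classical in
/-- The lazy random walk matrix of a graph `G` with degree parameter `d`. -/
noncomputable def lazyWalk {n : ℕ} (G : SimpleGraph (Fin n)) (d : ℕ) :
    Matrix (Fin n) (Fin n) ℝ :=
  Matrix.of fun u v =>
    if u = v then 1 - ((G.neighborSet u).ncard : ℝ) / (2 * d)
    else if G.Adj u v then 1 / (2 * d) else 0

/-- `G` has maximum degree at most `d`. -/
def MaxDegreeLE {n : ℕ} (G : SimpleGraph (Fin n)) (d : ℕ) : Prop :=
  ∀ v, (G.neighborSet v).ncard ≤ d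

/-- `p_u^t`: the endpoint distribution of a length-`t` lazy random walk from `u`. -/
noncomputable def pvec {n : ℕ} (G : SimpleGraph (Fin n)) (d t : ℕ) (u : Fin n) :
    EuclideanSpace ℝ (Fin n) :=
  WithLp.toLp 2 fun v => ((lazyWalk G d ^ t).mulVec fun w => if w = u then 1 else 0) v

/-- `q_u^t = p_u^t - (1/n) 𝟙`. -/
noncomputable def qvec {n : ℕ} (G : SimpleGraph (Fin n)) (d t : ℕ) (u : Fin n) :
    EuclideanSpace ℝ (Fin n) :=
  WithLp.toLp 2 fun v => pvec G d t u v - 1 / n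

/-- `q_u^0 = 1_u - (1/n) 𝟙`. -/
noncomputable def qzero {n : ℕ} (u : Fin n) : EuclideanSpace ℝ (Fin n) :=
  WithLp.toLp 2 fun v => (if v = u then 1 else 0) - 1 / n

/-- average of `q_u^0` over `u ∈ S`. -/
noncomputable def qavg {n : ℕ} (S : Finset (Fin n)) : EuclideanSpace ℝ (Fin n) :=
  (S.card : ℝ)⁻¹ • ∑ u ∈ S, qzero u

/-- `a` and `b` are `ε`-close to collinear. -/
def CloseCollinear {E : Type*} [NormedAddCommGroup E] [NormedSpace ℝ E]
    (ε : ℝ) (a b : E) : Prop :=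
  ∃ (ea eb w : E) (s s' : ℝ),
    ‖ea‖ ≤ ε ∧ ‖eb‖ ≤ ε ∧ a + ea = s • w ∧ b + eb = s' • w

/-- `a` and `b` are `ε`-close to antipodal. -/
def CloseAntipodal {E : Type*} [NormedAddCommGroup E] [NormedSpace ℝ E]
    (ε : ℝ) (a b : E) : Prop :=
  ∃ (ea eb w : E) (s s' : ℝ), 0 ≤ s ∧ 0 ≤ s' ∧
    ‖ea‖ ≤ ε ∧ ‖eb‖ ≤ ε ∧ a + ea = s • w ∧ b + eb = -(s' • w)

/-- `a` and `b` are `ε`-close to podal. -/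
def ClosePodal {E : Type*} [NormedAddCommGroup E] [NormedSpace ℝ E]
    (ε : ℝ) (a b : E) : Prop :=
  ∃ (ea eb w : E) (s s' : ℝ), 0 ≤ s ∧ 0 ≤ s' ∧
    ‖ea‖ ≤ ε ∧ ‖eb‖ ≤ ε ∧ a + ea = s • w ∧ b + eb = s' • w

/-- The Gram matrix `A_{u,v}` of two vectors. -/
noncomputable def gram2 {n : ℕ} (a b : EuclideanSpace ℝ (Fin n)) :
    Matrix (Fin 2) (Fin 2) ℝ :=
  !![‖a‖ ^ 2, ⟪a, b⟫; ⟪b, a⟫, ‖b‖ ^ 2]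

/-- Number of edges of `G` between `S` and `C \ S` (for `S ⊆ C`). -/
noncomputable def cutEdgesIn {n : ℕ} (G : SimpleGraph (Fin n)) (C S : Finset (Fin n)) : ℕ :=
  {p : Fin n × Fin n | p.1 ∈ S ∧ p.2 ∈ C ∧ p.2 ∉ S ∧ G.Adj p.1 p.2}.ncard

/-- Number of edges of `G` between `S` and its complement. -/
noncomputable def cutEdges {n : ℕ} (G : SimpleGraph (Fin n)) (S : Finset (Fin n)) : ℕ :=
  cutEdgesIn G Finset.univ S

/-- The cut conductance `φ_G(S) = e(S, V∖S) / (d|S|)`. -/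
noncomputable def cutCond {n : ℕ} (G : SimpleGraph (Fin n)) (d : ℕ) (S : Finset (Fin n)) : ℝ :=
  (cutEdges G S : ℝ) / (d * S.card)

/-- The (inner) conductance of the induced subgraph `G[C]` is at least `φ`. -/
def InnerConductanceGE {n : ℕ} (G : SimpleGraph (Fin n)) (d : ℕ) (C : Finset (Fin n))
    (φ : ℝ) : Prop :=
  ∀ S ⊆ C, S.Nonempty → 2 * S.card ≤ C.card →
    φ ≤ (cutEdgesIn G C S : ℝ) / (d * S.card)

/-- `G` is `(2, φ)`-clusterable. -/
def Clusterable2 {n : ℕ} (G : SimpleGraph (Fin n)) (d : ℕ) (φ : ℝ) : Prop :=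
  InnerConductanceGE G d Finset.univ φ ∨
  ∃ C₁ C₂ : Finset (Fin n), C₁.Nonempty ∧ C₂.Nonempty ∧ Disjoint C₁ C₂ ∧
    C₁ ∪ C₂ = Finset.univ ∧ InnerConductanceGE G d C₁ φ ∧ InnerConductanceGE G d C₂ φ

/-- `G` is `ε`-far from `(2, φ)`-clusterable. -/
def FarFromClusterable2 {n : ℕ} (G : SimpleGraph (Fin n)) (d : ℕ) (ε φ : ℝ) : Prop :=
  ∀ G' : SimpleGraph (Fin n), MaxDegreeLE G' d →
    ((symmDiff G.edgeSet G'.edgeSet).ncard : ℝ) ≤ ε * d * n →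
    ¬ Clusterable2 G' d φ

/-- The span of the eigenvectors of `M` with eigenvalue greater than `c`. -/
noncomputable def heavySpace {n : ℕ} (M : Matrix (Fin n) (Fin n) ℝ) (c : ℝ) :
    Submodule ℝ (EuclideanSpace ℝ (Fin n)) :=
  ⨆ μ : {μ : ℝ // c < μ}, Module.End.eigenspace (Matrix.toEuclideanLin M) (μ : ℝ)

/-- Orthogonal projection onto the span of the eigenvectors of `M` with eigenvalue
greater than `c`. -/
noncomputable def heavyProj {n : ℕ} (M : Matrix (Fin n) (Fin n) ℝ) (c : ℝ)
    (x : EuclideanSpace ℝ (Fin n)) : EuclideanSpace ℝ (Fin n) :=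
  (Submodule.orthogonalProjectionOnto (heavySpace M c) x : EuclideanSpace ℝ (Fin n))

theorem closeCollinear_of_norm_smul_add_smul_sq_le {E : Type*} [NormedAddCommGroup E]
    [NormedSpace ℝ E] {a b : E} {x₀ x₁ δ : ℝ} (hδ : 0 ≤ δ) (hx : 0 < x₀ ^ 2 + x₁ ^ 2)
    (hc : ‖x₀ • a + x₁ • b‖ ^ 2 ≤ δ ^ 2 * (x₀ ^ 2 + x₁ ^ 2)) :
    CloseCollinear δ a b := by
  set S := x₀ ^ 2 + x₁ ^ 2
  set c := x₀ • a + x₁ • b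
  have error_le {y : ℝ} (hy : y ^ 2 ≤ S) : ‖-(y / S) • c‖ ≤ δ := by
    refine (pow_le_pow_iff_left₀ (norm_nonneg _) hδ two_ne_zero).mp ?_
    calc ‖-(y / S) • c‖ ^ 2 = y ^ 2 / S ^ 2 * ‖c‖ ^ 2 := by
          rw [norm_smul, norm_neg, Real.norm_eq_abs, mul_pow, sq_abs, div_pow]
      _ ≤ y ^ 2 / S ^ 2 * (δ ^ 2 * S) := by gcongr
      _ = δ ^ 2 * (y ^ 2 / S) := by field_simp
      _ ≤ δ ^ 2 := mul_le_of_le_one_right (sq_nonneg δ) ((div_le_one hx).mpr hy)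
  refine ⟨-(x₀ / S) • c, -(x₁ / S) • c, x₁ • a - x₀ • b, x₁ / S, -(x₀ / S),
    error_le (le_add_of_nonneg_right (sq_nonneg x₁)),
    error_le (le_add_of_nonneg_left (sq_nonneg x₀)), ?_, ?_⟩ <;>
  · simp only [c]
    match_scalars <;> field_simp
    ring

open Matrix in
theorem dotProduct_gram2_mulVec {n : ℕ} (a b : EuclideanSpace ℝ (Fin n)) (x : Fin 2 → ℝ) :
    x ⬝ᵥ (gram2 a b *ᵥ x) = ‖x 0 • a + x 1 • b‖ ^ 2 := by
  rw [← real_inner_self_eq_norm_sq]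
  simp only [gram2, inner_add_left, inner_add_right, real_inner_smul_left, real_inner_smul_right,
    real_inner_comm a b, dotProduct, Fin.sum_univ_two, Matrix.mulVec, Matrix.cons_val_zero,
    Matrix.cons_val_one, Matrix.of_apply]
  simp only [real_inner_self_eq_norm_sq]
  ring

open Matrix in
theorem le_of_gram2_mulVec_eq_smul_of_not_closeCollinear {n : ℕ}
    {a b : EuclideanSpace ℝ (Fin n)} {ε μ : ℝ} {x : Fin 2 → ℝ} (hε : 0 < ε)
    (hab : ¬ CloseCollinear ε a b) (hx : x ≠ 0) (hμx : gram2 a b *ᵥ x = μ • x) :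
    ε ^ 2 ≤ μ := by
  have hS : 0 < x 0 ^ 2 + x 1 ^ 2 := by
    simpa [dotProduct, Fin.sum_univ_two, sq] using dotProduct_self_star_pos_iff.mpr hx
  have hquad : ‖x 0 • a + x 1 • b‖ ^ 2 = μ * (x 0 ^ 2 + x 1 ^ 2) := by
    rw [← dotProduct_gram2_mulVec, hμx, dotProduct_smul]
    simp [dotProduct, Fin.sum_univ_two, sq]
  by_contra! hμ
  exact hab (closeCollinear_of_norm_smul_add_smul_sq_le hε.le hS
    (hquad.trans_le (mul_le_mul_of_nonneg_right hμ.le hS.le)))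

open Matrix in
theorem stmt1_general {n d : ℕ} (G : SimpleGraph (Fin n))
    (u v : Fin n) (t : ℕ) (ε : ℝ) (hε0 : 0 < ε)
    (h : ¬ CloseCollinear ε (qvec G d t u) (qvec G d t v)) :
    ∀ (μ : ℝ) (x : Fin 2 → ℝ), x ≠ 0 →
      (gram2 (qvec G d t u) (qvec G d t v)).mulVec x = μ • x → ε ^ 2 ≤ μ :=
  fun _ _ hx hμx => le_of_gram2_mulVec_eq_smul_of_not_closeCollinear hε0 h hx hμx

open Matrix in
theorem stmt1 {n d : ℕ} (hd : 1 ≤ d) (G : SimpleGraph (Fin n)) (hdeg : MaxDegreeLE G d)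
    (u v : Fin n) (t : ℕ) (ε : ℝ) (hε0 : 0 < ε)
    (h : ¬ CloseCollinear ε (qvec G d t u) (qvec G d t v)) :
    ∀ (μ : ℝ) (x : Fin 2 → ℝ), x ≠ 0 →
      (gram2 (qvec G d t u) (qvec G d t v)).mulVec x = μ • x → ε ^ 2 ≤ μ :=
  stmt1_general G u v t ε hε0 h
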